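/- arXiv:2410.11930 — 3 statements merged into one kernel-verified Lean document; each statement's English description precedes it below -/
import Mathlib

section
/- For an ℓ-group G the following are equivalent: (i) G is a Martínez ℓ-group, i.e., every convex ℓ-subgroup of G is a d-subgroup; (ii) G(g) is a d-subgroup for every g ∈ G; (iii) G(g) = g^{⊥⊥} for every g ∈ G; (iv) for all g,h ∈ G, g^{⊥⊥} = h^{⊥⊥} if and only if G(g) = G(h). -/
/-!
Common definitions for lattice-ordered groups (ℓ-groups), written additively.
An ℓ-group is modeled as `[Lattice G] [AddGroup G]` together with the two
`CovariantClass` hypotheses expressing that translation is order-preserving.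
-/

/-- The absolute value in an ℓ-group: `|g| = (g ⊔ 0) + ((-g) ⊔ 0)`. -/
def labs {G : Type*} [Lattice G] [AddGroup G] (g : G) : G := (g ⊔ 0) + (-g ⊔ 0)

/-- A convex ℓ-subgroup of `G`: a subgroup which is a sublattice and is convex. -/
def IsConvexLSubgroup {G : Type*} [Lattice G] [AddGroup G] (H : Set G) : Prop :=
  (0 : G) ∈ H ∧ (∀ a ∈ H, -a ∈ H) ∧ (∀ a ∈ H, ∀ b ∈ H, a + b ∈ H) ∧
  (∀ a ∈ H, ∀ b ∈ H, a ⊔ b ∈ H) ∧ (∀ a ∈ H, ∀ b ∈ H, a ⊓ b ∈ H) ∧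
  (∀ a ∈ H, ∀ b ∈ H, ∀ g : G, a ≤ g → g ≤ b → g ∈ H)

/-- The polar `g^⊥ = {h : |h| ⊓ |g| = 0}`. -/
def polar {G : Type*} [Lattice G] [AddGroup G] (g : G) : Set G :=
  {h : G | labs h ⊓ labs g = 0}

/-- The double polar `g^{⊥⊥} = (g^⊥)^⊥ = {h : ∀ k ∈ g^⊥, |h| ⊓ |k| = 0}`. -/
def biPolar {G : Type*} [Lattice G] [AddGroup G] (g : G) : Set G :=
  {h : G | ∀ k ∈ polar g, labs h ⊓ labs k = 0}

/-- A d-subgroup: a convex ℓ-subgroup containing the double polar of each of its elements. -/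
def IsDSubgroup {G : Type*} [Lattice G] [AddGroup G] (H : Set G) : Prop :=
  IsConvexLSubgroup H ∧ ∀ h ∈ H, biPolar h ⊆ H

/-- A Martínez ℓ-group: every convex ℓ-subgroup is a d-subgroup. -/
def Martinez (G : Type*) [Lattice G] [AddGroup G] : Prop :=
  ∀ H : Set G, IsConvexLSubgroup H → IsDSubgroup H

/-- `G(g)`, the smallest convex ℓ-subgroup of `G` containing `g`. -/
def principalCLS {G : Type*} [Lattice G] [AddGroup G] (g : G) : Set G :=
  {x : G | ∀ H : Set G, IsConvexLSubgroup H → g ∈ H → x ∈ H}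



section
variable {G : Type*} [Lattice G] [AddGroup G]
  [CovariantClass G G (· + ·) (· ≤ ·)]
  [CovariantClass G G (Function.swap (· + ·)) (· ≤ ·)]

theorem my_labs_nonneg (a : G) : 0 ≤ labs a := by
  have := add_le_add (le_sup_right : (0:G) ≤ a ⊔ 0) (le_sup_right : (0:G) ≤ -a ⊔ 0)
  simpa [labs] using this

theorem my_le_labs (a : G) : a ≤ labs a :=
  le_trans le_sup_left (le_add_of_nonneg_right le_sup_right)

theorem my_neg_le_labs (a : G) : -a ≤ labs a :=
  le_trans le_sup_left (le_add_of_nonneg_left le_sup_right)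

theorem my_neg_le_neg' {a b : G} (h : a ≤ b) : -b ≤ -a := by
  have := add_le_add_right (add_le_add_left h (-b)) (-a)
  simpa [add_assoc] using this

theorem my_neg_le_of_neg_le {a b : G} (h : -a ≤ b) : -b ≤ a := by
  have := my_neg_le_neg' h
  simpa using this

theorem my_neg_labs_le (a : G) : -labs a ≤ a := my_neg_le_of_neg_le (my_neg_le_labs a)

theorem my_labs_of_nonneg {a : G} (h : 0 ≤ a) : labs a = a := by
  unfold labs
  rw [sup_eq_left.2 h, sup_eq_right.2 (neg_nonpos.2 h), add_zero]

theorem my_inf_add (x y z : G) : (x ⊓ y) + z = (x + z) ⊓ (y + z) := by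
  apply le_antisymm
  · exact le_inf (add_le_add inf_le_left (le_refl z)) (add_le_add inf_le_right (le_refl z))
  · rw [← sub_le_iff_le_add]
    exact le_inf (by rw [sub_le_iff_le_add]; exact inf_le_left)
      (by rw [sub_le_iff_le_add]; exact inf_le_right)

theorem my_disj_add {a b c : G} (ha : 0 ≤ a) (hb : 0 ≤ b) (hc : 0 ≤ c)
    (hca : c ⊓ a = 0) (hcb : c ⊓ b = 0) : c ⊓ (a + b) = 0 := by
  have h1 : c ⊓ (a + b) ≤ (c ⊓ a) + b :=
    (my_inf_add c a b) ▸ le_inf (le_trans inf_le_left (le_add_of_nonneg_right hb)) inf_le_right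
  rw [hca, zero_add] at h1
  have h2 : c ⊓ (a + b) ≤ c ⊓ b := le_inf inf_le_left h1
  rw [hcb] at h2
  exact le_antisymm h2 (le_inf hc (add_nonneg ha hb))
end
set_option linter.unusedSectionVars false

section
variable {G : Type*} [Lattice G] [AddGroup G]
  [CovariantClass G G (· + ·) (· ≤ ·)]
  [CovariantClass G G (Function.swap (· + ·)) (· ≤ ·)]

theorem my_squeeze {g p q x : G} (hp0 : 0 ≤ p) (hq0 : 0 ≤ q)
    (hp : p ⊓ labs g = 0) (hq : q ⊓ labs g = 0)
    (h1 : -q ≤ x) (h2 : x ≤ p) : x ∈ polar g := by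
  have hb : labs x ≤ p + q := by
    have b1 : x ⊔ 0 ≤ p := sup_le h2 hp0
    have b2 : -x ⊔ 0 ≤ q := sup_le (my_neg_le_of_neg_le h1) hq0
    exact add_le_add b1 b2
  have hpq : (p + q) ⊓ labs g = 0 := by
    rw [inf_comm] at hp hq ⊢
    exact my_disj_add hp0 hq0 (my_labs_nonneg g) hp hq
  have hle : labs x ⊓ labs g ≤ 0 := hpq ▸ inf_le_inf_right (labs g) hb
  exact le_antisymm hle (le_inf (my_labs_nonneg x) (my_labs_nonneg g))

theorem mem_polar_labs {g a : G} (ha : a ∈ polar g) : labs a ⊓ labs g = 0 := ha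

theorem polar_isCLS (g : G) : IsConvexLSubgroup (polar (G := G) g) := by
  have habs : ∀ a ∈ polar g, labs a ⊓ labs g = 0 := fun a ha => ha
  have haddmem : ∀ a ∈ polar g, ∀ b ∈ polar g, (labs a + labs b) ⊓ labs g = 0 := by
    intro a ha b hb
    have ha' : labs g ⊓ labs a = 0 := by rw [inf_comm]; exact ha
    have hb' : labs g ⊓ labs b = 0 := by rw [inf_comm]; exact hb
    rw [inf_comm]
    exact my_disj_add (my_labs_nonneg a) (my_labs_nonneg b) (my_labs_nonneg g) ha' hb'
  refine ⟨?_, ?_, ?_, ?_, ?_, ?_⟩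
  · show labs (0 : G) ⊓ labs g = 0
    rw [my_labs_of_nonneg (le_refl (0:G))]
    exact inf_eq_left.2 (my_labs_nonneg g)
  · intro a ha
    exact my_squeeze (my_labs_nonneg a) (my_labs_nonneg a) ha ha
      (my_neg_le_neg' (my_le_labs a)) (my_neg_le_labs a)
  · intro a ha b hb
    refine my_squeeze (add_nonneg (my_labs_nonneg a) (my_labs_nonneg b))
      (add_nonneg (my_labs_nonneg b) (my_labs_nonneg a))
      (haddmem a ha b hb) (haddmem b hb a ha) ?_ ?_
    · rw [neg_add_rev]
      exact add_le_add (my_neg_labs_le a) (my_neg_labs_le b)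
    · exact add_le_add (my_le_labs a) (my_le_labs b)
  · intro a ha b hb
    refine my_squeeze (add_nonneg (my_labs_nonneg a) (my_labs_nonneg b))
      (my_labs_nonneg a) (haddmem a ha b hb) ha
      (le_trans (my_neg_labs_le a) le_sup_left)
      (sup_le (le_trans (my_le_labs a) (le_add_of_nonneg_right (my_labs_nonneg b)))
        (le_trans (my_le_labs b) (le_add_of_nonneg_left (my_labs_nonneg a))))
  · intro a ha b hb
    refine my_squeeze (my_labs_nonneg a)
      (add_nonneg (my_labs_nonneg a) (my_labs_nonneg b)) ha (haddmem a ha b hb)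
      (le_inf ?_ ?_) (le_trans inf_le_left (my_le_labs a))
    · exact le_trans (my_neg_le_neg' (le_add_of_nonneg_right (my_labs_nonneg b))) (my_neg_labs_le a)
    · exact le_trans (my_neg_le_neg' (le_add_of_nonneg_left (my_labs_nonneg a))) (my_neg_labs_le b)
  · intro a ha b hb x h1 h2
    exact my_squeeze (my_labs_nonneg b) (my_labs_nonneg a) hb ha
      (le_trans (my_neg_labs_le a) h1) (le_trans h2 (my_le_labs b))

theorem biPolar_eq_inter (g : G) : biPolar g = {h : G | ∀ k ∈ polar g, h ∈ polar k} := rfl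

theorem biPolar_isCLS (g : G) : IsConvexLSubgroup (biPolar (G := G) g) := by
  refine ⟨?_, ?_, ?_, ?_, ?_, ?_⟩
  · exact fun k hk => (polar_isCLS k).1
  · exact fun a ha k hk => (polar_isCLS k).2.1 a (ha k hk)
  · exact fun a ha b hb k hk => (polar_isCLS k).2.2.1 a (ha k hk) b (hb k hk)
  · exact fun a ha b hb k hk => (polar_isCLS k).2.2.2.1 a (ha k hk) b (hb k hk)
  · exact fun a ha b hb k hk => (polar_isCLS k).2.2.2.2.1 a (ha k hk) b (hb k hk)
  · exact fun a ha b hb x h1 h2 k hk =>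
      (polar_isCLS k).2.2.2.2.2 a (ha k hk) b (hb k hk) x h1 h2

theorem self_mem_biPolar (g : G) : g ∈ biPolar g := fun k hk => by
  rw [inf_comm]; exact hk

theorem principal_isCLS (g : G) : IsConvexLSubgroup (principalCLS (G := G) g) := by
  refine ⟨?_, ?_, ?_, ?_, ?_, ?_⟩
  · exact fun H hH _ => hH.1
  · exact fun a ha H hH hg => hH.2.1 a (ha H hH hg)
  · exact fun a ha b hb H hH hg => hH.2.2.1 a (ha H hH hg) b (hb H hH hg)
  · exact fun a ha b hb H hH hg => hH.2.2.2.1 a (ha H hH hg) b (hb H hH hg)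
  · exact fun a ha b hb H hH hg => hH.2.2.2.2.1 a (ha H hH hg) b (hb H hH hg)
  · exact fun a ha b hb x h1 h2 H hH hg =>
      hH.2.2.2.2.2 a (ha H hH hg) b (hb H hH hg) x h1 h2

theorem self_mem_principal (g : G) : g ∈ principalCLS g := fun _ _ hg => hg

theorem principal_subset {g : G} {H : Set G} (hH : IsConvexLSubgroup H) (hg : g ∈ H) :
    principalCLS g ⊆ H := fun _ hx => hx H hH hg

theorem principal_subset_biPolar (g : G) : principalCLS g ⊆ biPolar g :=
  principal_subset (biPolar_isCLS g) (self_mem_biPolar g)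

theorem polar_sup_eq {g h : G} (hh : h ∈ biPolar g) :
    polar (labs g ⊔ labs h) = polar g := by
  have hs0 : (0:G) ≤ labs g ⊔ labs h := le_trans (my_labs_nonneg g) le_sup_left
  ext x
  simp only [polar, Set.mem_setOf_eq, my_labs_of_nonneg hs0]
  constructor
  · intro hx
    refine le_antisymm (hx ▸ inf_le_inf_left (labs x) le_sup_left)
      (le_inf (my_labs_nonneg x) (my_labs_nonneg g))
  · intro hx
    have hxh : labs x ⊓ labs h = 0 := by rw [inf_comm]; exact hh x hx
    have hsum : labs x ⊓ (labs g + labs h) = 0 :=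
      my_disj_add (my_labs_nonneg g) (my_labs_nonneg h) (my_labs_nonneg x) hx hxh
    refine le_antisymm ?_ (le_inf (my_labs_nonneg x) hs0)
    calc labs x ⊓ (labs g ⊔ labs h) ≤ labs x ⊓ (labs g + labs h) :=
          inf_le_inf_left _ (sup_le (le_add_of_nonneg_right (my_labs_nonneg h))
            (le_add_of_nonneg_left (my_labs_nonneg g)))
      _ = 0 := hsum

theorem mem_principal_sup {g h : G} : h ∈ principalCLS (labs g ⊔ labs h) := by
  intro H hH hk
  refine hH.2.2.2.2.2 (-(labs g ⊔ labs h)) (hH.2.1 _ hk) (labs g ⊔ labs h) hk h ?_ ?_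
  · exact le_trans (my_neg_le_neg' le_sup_right) (my_neg_labs_le h)
  · exact le_trans (my_le_labs h) le_sup_right

end

/-- `G` is Martínez iff every principal convex ℓ-subgroup is a
d-subgroup, iff `G(g) = g^{⊥⊥}` for all `g`, iff principal convex ℓ-subgroups
and principal polars determine each other. -/
theorem stmt_1 {G : Type*} [Lattice G] [AddGroup G]
    [CovariantClass G G (· + ·) (· ≤ ·)]
    [CovariantClass G G (Function.swap (· + ·)) (· ≤ ·)] :
    (Martinez G ↔ ∀ g : G, IsDSubgroup (principalCLS g)) ∧
    (Martinez G ↔ ∀ g : G, principalCLS g = biPolar g) ∧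
    (Martinez G ↔ ∀ g h : G, biPolar g = biPolar h ↔ principalCLS g = principalCLS h) := by
  have AB : Martinez G → ∀ g : G, IsDSubgroup (principalCLS g) :=
    fun hM g => hM _ (principal_isCLS g)
  have BC : (∀ g : G, IsDSubgroup (principalCLS g)) →
      ∀ g : G, principalCLS g = biPolar g := fun hB g =>
    Set.Subset.antisymm (principal_subset_biPolar g)
      ((hB g).2 g (self_mem_principal g))
  have CA : (∀ g : G, principalCLS g = biPolar g) → Martinez G := by
    intro hC H hH
    refine ⟨hH, fun h hh => ?_⟩
    rw [← hC h]
    exact principal_subset hH hh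
  have DC : (∀ g h : G, biPolar g = biPolar h ↔ principalCLS g = principalCLS h) →
      ∀ g : G, principalCLS g = biPolar g := by
    intro hD g
    refine Set.Subset.antisymm (principal_subset_biPolar g) (fun h hh => ?_)
    have hpol : polar (labs g ⊔ labs h) = polar g := polar_sup_eq hh
    have hbip : biPolar (labs g ⊔ labs h) = biPolar g := by
      unfold biPolar; rw [hpol]
    have hpr : principalCLS (labs g ⊔ labs h) = principalCLS g := (hD _ _).1 hbip
    exact hpr ▸ mem_principal_sup
  refine ⟨⟨AB, fun hB => CA (BC hB)⟩, ⟨fun hM => BC (AB hM), CA⟩,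
    ⟨fun hM g h => by rw [BC (AB hM) g, BC (AB hM) h], fun hD => CA (DC hD)⟩⟩
end

section
/- For an ℓ-group G the following are equivalent: (i) G is a Martínez ℓ-group; (ii) every convex ℓ-subgroup H of G, regarded as an ℓ-group in its own right, is a Martínez ℓ-group; (iii) for every g ∈ G, the principal convex ℓ-subgroup G(g), regarded as an ℓ-group in its own right, is a Martínez ℓ-group. -/
/-- An ℓ-subgroup of `G`: a subgroup that is also a sublattice. -/
def IsLSubgroup {G : Type*} [Lattice G] [AddGroup G] (H : Set G) : Prop :=
  (0 : G) ∈ H ∧ (∀ a ∈ H, -a ∈ H) ∧ (∀ a ∈ H, ∀ b ∈ H, a + b ∈ H) ∧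
  (∀ a ∈ H, ∀ b ∈ H, a ⊔ b ∈ H) ∧ (∀ a ∈ H, ∀ b ∈ H, a ⊓ b ∈ H)

/-- `K` is a convex ℓ-subgroup of the ℓ-group `H` (an ℓ-subgroup of `G`),
with convexity relative to `H`. -/
def IsConvexLSubgroupIn {G : Type*} [Lattice G] [AddGroup G] (H K : Set G) : Prop :=
  K ⊆ H ∧ (0 : G) ∈ K ∧ (∀ a ∈ K, -a ∈ K) ∧ (∀ a ∈ K, ∀ b ∈ K, a + b ∈ K) ∧
  (∀ a ∈ K, ∀ b ∈ K, a ⊔ b ∈ K) ∧ (∀ a ∈ K, ∀ b ∈ K, a ⊓ b ∈ K) ∧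
  (∀ a ∈ K, ∀ b ∈ K, ∀ g ∈ H, a ≤ g → g ≤ b → g ∈ K)

/-- The polar of `g` computed inside the ℓ-subgroup `H` of `G`. -/
def polarIn {G : Type*} [Lattice G] [AddGroup G] (H : Set G) (g : G) : Set G :=
  {h ∈ H | labs h ⊓ labs g = 0}

/-- The double polar of `g` computed inside the ℓ-subgroup `H` of `G`. -/
def biPolarIn {G : Type*} [Lattice G] [AddGroup G] (H : Set G) (g : G) : Set G :=
  {h ∈ H | ∀ k ∈ polarIn H g, labs h ⊓ labs k = 0}

/-- The ℓ-subgroup `H` of `G`, regarded as an ℓ-group in its own right, is a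
Martínez ℓ-group: every convex ℓ-subgroup of `H` is a d-subgroup of `H`. -/
def MartinezIn {G : Type*} [Lattice G] [AddGroup G] (H : Set G) : Prop :=
  ∀ K : Set G, IsConvexLSubgroupIn H K → ∀ h ∈ K, biPolarIn H h ⊆ K

section Aux
set_option linter.unusedSectionVars false

variable {G : Type*} [Lattice G] [AddGroup G]
  [CovariantClass G G (· + ·) (· ≤ ·)]
  [CovariantClass G G (Function.swap (· + ·)) (· ≤ ·)]

lemma labs_nonneg (g : G) : 0 ≤ labs g := by
  have h : (0:G) + 0 ≤ (g ⊔ 0) + (-g ⊔ 0) := add_le_add le_sup_right le_sup_right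
  simpa [labs] using h

lemma le_labs (g : G) : g ≤ labs g := by
  calc g ≤ g ⊔ 0 := le_sup_left
    _ = (g ⊔ 0) + 0 := (add_zero _).symm
    _ ≤ (g ⊔ 0) + (-g ⊔ 0) := add_le_add_right le_sup_right _

lemma neg_le_labs (g : G) : -g ≤ labs g := by
  calc -g ≤ -g ⊔ 0 := le_sup_left
    _ = 0 + (-g ⊔ 0) := (zero_add _).symm
    _ ≤ (g ⊔ 0) + (-g ⊔ 0) := add_le_add_left le_sup_right _

lemma neg_labs_le (g : G) : -labs g ≤ g := neg_le.mp (neg_le_labs g)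

lemma labs_of_nonneg {g : G} (h : 0 ≤ g) : labs g = g := by
  unfold labs
  rw [sup_eq_left.mpr h, sup_eq_right.mpr (neg_nonpos.mpr h), add_zero]

lemma labs_mem {H : Set G} (hH : IsConvexLSubgroup H) {x : G} (hx : x ∈ H) :
    labs x ∈ H := by
  obtain ⟨h0, hneg, hadd, hsup, -, -⟩ := hH
  exact hadd _ (hsup x hx 0 h0) _ (hsup _ (hneg x hx) 0 h0)

lemma mem_of_labs_mem {H : Set G} (hH : IsConvexLSubgroup H) {x : G}
    (hx : labs x ∈ H) : x ∈ H := by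
  obtain ⟨-, hneg, -, -, -, hconv⟩ := hH
  exact hconv _ (hneg _ hx) _ hx x (neg_labs_le x) (le_labs x)

lemma principal_convex (g : G) : IsConvexLSubgroup (principalCLS g) := by
  refine ⟨?_, ?_, ?_, ?_, ?_, ?_⟩
  · intro H hH hg; exact hH.1
  · intro a ha H hH hg; exact hH.2.1 a (ha H hH hg)
  · intro a ha b hb H hH hg; exact hH.2.2.1 a (ha H hH hg) b (hb H hH hg)
  · intro a ha b hb H hH hg; exact hH.2.2.2.1 a (ha H hH hg) b (hb H hH hg)
  · intro a ha b hb H hH hg; exact hH.2.2.2.2.1 a (ha H hH hg) b (hb H hH hg)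
  · intro a ha b hb x hax hxb H hH hg
    exact hH.2.2.2.2.2 a (ha H hH hg) b (hb H hH hg) x hax hxb

lemma biPolarIn_subset_biPolar {H : Set G} (hH : IsConvexLSubgroup H) (h : G) :
    biPolarIn H h ⊆ biPolar h := by
  rintro x ⟨hxH, hx2⟩ k hk
  have hnn : (0:G) ≤ labs x ⊓ labs k := le_inf (labs_nonneg x) (labs_nonneg k)
  have hk' : labs x ⊓ labs k ∈ H :=
    hH.2.2.2.2.2 0 hH.1 (labs x) (labs_mem hH hxH) _ hnn inf_le_left
  have habs : labs (labs x ⊓ labs k) = labs x ⊓ labs k := labs_of_nonneg hnn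
  have hpol : labs x ⊓ labs k ∈ polarIn H h := by
    refine ⟨hk', ?_⟩
    rw [habs]
    refine le_antisymm ?_ (le_inf hnn (labs_nonneg h))
    calc labs x ⊓ labs k ⊓ labs h ≤ labs k ⊓ labs h := inf_le_inf_right _ inf_le_right
      _ = 0 := hk
  have h0 := hx2 _ hpol
  rw [habs, ← inf_assoc, inf_idem] at h0
  exact h0

lemma nested_convex {H K : Set G} (hH : IsConvexLSubgroup H)
    (hK : IsConvexLSubgroupIn H K) : IsConvexLSubgroup K := by
  obtain ⟨hKH, h0, hneg, hadd, hsup, hinf, hconv⟩ := hK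
  refine ⟨h0, hneg, hadd, hsup, hinf, ?_⟩
  intro a ha b hb x hax hxb
  exact hconv a ha b hb x (hH.2.2.2.2.2 a (hKH ha) b (hKH hb) x hax hxb) hax hxb

lemma imp12 (hm : Martinez G) :
    ∀ H : Set G, IsConvexLSubgroup H → MartinezIn H := by
  intro H hH K hK h hh x hx
  exact (hm K (nested_convex hH hK)).2 h hh (biPolarIn_subset_biPolar hH h hx)

lemma imp31 (hp : ∀ g : G, MartinezIn (principalCLS g)) : Martinez G := by
  intro H hH
  refine ⟨hH, ?_⟩
  intro h hh x hx
  set g := labs x ⊔ labs h with hg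
  have key : ∀ y : G, labs y ≤ g → y ∈ principalCLS g := by
    intro y hy H' hH' hgH'
    have hly : labs y ∈ H' := hH'.2.2.2.2.2 0 hH'.1 g hgH' _ (labs_nonneg y) hy
    exact mem_of_labs_mem hH' hly
  have hxP : x ∈ principalCLS g := key x le_sup_left
  have hhP : h ∈ principalCLS g := key h le_sup_right
  have hPc : IsConvexLSubgroup (principalCLS g) := principal_convex g
  have hKin : IsConvexLSubgroupIn (principalCLS g) (H ∩ principalCLS g) := by
    refine ⟨Set.inter_subset_right, ⟨hH.1, hPc.1⟩, ?_, ?_, ?_, ?_, ?_⟩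
    · rintro a ⟨ha1, ha2⟩; exact ⟨hH.2.1 a ha1, hPc.2.1 a ha2⟩
    · rintro a ⟨ha1, ha2⟩ b ⟨hb1, hb2⟩
      exact ⟨hH.2.2.1 a ha1 b hb1, hPc.2.2.1 a ha2 b hb2⟩
    · rintro a ⟨ha1, ha2⟩ b ⟨hb1, hb2⟩
      exact ⟨hH.2.2.2.1 a ha1 b hb1, hPc.2.2.2.1 a ha2 b hb2⟩
    · rintro a ⟨ha1, ha2⟩ b ⟨hb1, hb2⟩
      exact ⟨hH.2.2.2.2.1 a ha1 b hb1, hPc.2.2.2.2.1 a ha2 b hb2⟩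
    · rintro a ⟨ha1, ha2⟩ b ⟨hb1, hb2⟩ y hy hay hyb
      exact ⟨hH.2.2.2.2.2 a ha1 b hb1 y hay hyb, hy⟩
  have hxbi : x ∈ biPolarIn (principalCLS g) h :=
    ⟨hxP, fun k hk => hx k hk.2⟩
  exact (hp g (H ∩ principalCLS g) hKin h ⟨hh, hhP⟩ hxbi).1

end Aux

/-- `G` is Martínez iff every convex ℓ-subgroup of `G` is Martínez
(as an ℓ-group in its own right) iff every principal convex ℓ-subgroup of `G`
is Martínez (as an ℓ-group in its own right). -/
theorem stmt_3 {G : Type*} [Lattice G] [AddGroup G]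
    [CovariantClass G G (· + ·) (· ≤ ·)]
    [CovariantClass G G (Function.swap (· + ·)) (· ≤ ·)] :
    (Martinez G ↔ ∀ H : Set G, IsConvexLSubgroup H → MartinezIn H) ∧
    (Martinez G ↔ ∀ g : G, MartinezIn (principalCLS g)) := by
  constructor
  · exact ⟨fun hm => imp12 hm, fun h => imp31 (fun g => h _ (principal_convex g))⟩
  · exact ⟨fun hm g => imp12 hm _ (principal_convex g), imp31⟩
end

section
/- For an ℓ-group G the following are equivalent: (i) G is a Martínez ℓ-group; (ii) the set Min(G) of minimal prime subgroups is dense in Spec(G) with respect to the patch topology; (iii) the collection {U(g) : 0 < g ∈ G} is a π-base for the patch topology on Spec(G), i.e., every nonempty patch-open set contains a nonempty set of the form U(g) with g > 0. -/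
/-- A prime subgroup: a proper convex ℓ-subgroup `P` with `a ⊓ b ∈ P → a ∈ P ∨ b ∈ P`. -/
def IsPrimeSubgroup {G : Type*} [Lattice G] [AddGroup G] (P : Set G) : Prop :=
  IsConvexLSubgroup P ∧ P ≠ Set.univ ∧ ∀ a b : G, a ⊓ b ∈ P → a ∈ P ∨ b ∈ P

/-- A minimal prime subgroup. -/
def IsMinimalPrimeLSubgroup {G : Type*} [Lattice G] [AddGroup G] (P : Set G) : Prop :=
  IsPrimeSubgroup P ∧ ∀ Q : Set G, IsPrimeSubgroup Q → Q ⊆ P → Q = P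

/-- `Spec(G)`, the set of prime subgroups of `G`, as a type. -/
abbrev SpecType (G : Type*) [Lattice G] [AddGroup G] : Type _ :=
  {P : Set G // IsPrimeSubgroup P}

/-- `U(g) = {P ∈ Spec(G) : g ∉ P}`. -/
def Uset {G : Type*} [Lattice G] [AddGroup G] (g : G) : Set (SpecType G) :=
  {P : SpecType G | g ∉ P.1}

/-- `V(g) = {P ∈ Spec(G) : g ∈ P}`. -/
def Vset {G : Type*} [Lattice G] [AddGroup G] (g : G) : Set (SpecType G) :=
  {P : SpecType G | g ∈ P.1}

/-- The patch topology on `Spec(G)`, generated by all the sets `U(g)` and `V(g)`. -/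
def patchTop (G : Type*) [Lattice G] [AddGroup G] : TopologicalSpace (SpecType G) :=
  TopologicalSpace.generateFrom
    ({S : Set (SpecType G) | ∃ g : G, S = Uset g} ∪
      {S : Set (SpecType G) | ∃ g : G, S = Vset g})

/-- The hull-kernel topology on `Spec(G)`, with base `{U(g) : g ∈ G}`. -/
def hkTop (G : Type*) [Lattice G] [AddGroup G] : TopologicalSpace (SpecType G) :=
  TopologicalSpace.generateFrom {S : Set (SpecType G) | ∃ g : G, S = Uset g}

set_option linter.unusedSectionVars false
set_option linter.unusedVariables false
set_option linter.unnecessarySimpa false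
set_option maxHeartbeats 1000000

namespace Stmt4Aux

variable {G : Type*} [Lattice G] [AddGroup G]
  [CovariantClass G G (· + ·) (· ≤ ·)]
  [CovariantClass G G (Function.swap (· + ·)) (· ≤ ·)]

lemma labs_def (a : G) : labs a = (a ⊔ 0) + (-a ⊔ 0) := rfl

lemma labs_nonneg (a : G) : (0:G) ≤ labs a := by
  have : (0:G) + 0 ≤ (a ⊔ 0) + (-a ⊔ 0) := add_le_add le_sup_right le_sup_right
  simpa [labs_def] using this

lemma le_labs (a : G) : a ≤ labs a := by
  rw [labs_def]
  exact le_sup_left.trans (le_add_of_nonneg_right le_sup_right)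

lemma neg_le_labs (a : G) : -a ≤ labs a := by
  rw [labs_def]
  exact le_sup_left.trans (le_add_of_nonneg_left le_sup_right)

lemma labs_of_nonneg {a : G} (h : 0 ≤ a) : labs a = a := by
  rw [labs_def, sup_eq_left.mpr h, sup_eq_right.mpr (neg_nonpos.mpr h), add_zero]

lemma eq_zero_of_labs_eq_zero {a : G} (h : labs a = 0) : a = 0 := by
  rw [labs_def] at h
  have h1 : a ⊔ 0 ≤ 0 := by
    calc a ⊔ 0 = (a ⊔ 0) + 0 := (add_zero _).symm
    _ ≤ (a ⊔ 0) + (-a ⊔ 0) := add_le_add_right le_sup_right _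
    _ = 0 := h
  have h2 : -a ⊔ 0 ≤ 0 := by
    calc -a ⊔ 0 = 0 + (-a ⊔ 0) := (zero_add _).symm
    _ ≤ (a ⊔ 0) + (-a ⊔ 0) := add_le_add_left le_sup_right _
    _ = 0 := h
  exact le_antisymm (le_sup_left.trans h1) (neg_nonpos.mp (le_sup_left.trans h2))

lemma labs_le_of {z w : G} (hw : 0 ≤ w) (h1 : z ≤ w) (h2 : -z ≤ w) : labs z ≤ w + w := by
  rw [labs_def]
  exact add_le_add (sup_le h1 hw) (sup_le h2 hw)

lemma riesz {u v w : G} (hu : 0 ≤ u) (hv : 0 ≤ v) (hw : 0 ≤ w) :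
    (u + v) ⊓ w ≤ (u ⊓ w) + (v ⊓ w) := by
  have he : (u ⊓ w) + (v ⊓ w) = ((u+v) ⊓ (w+v)) ⊓ ((u+w) ⊓ (w+w)) := by
    rw [add_inf v w (u ⊓ w), inf_add u w v, inf_add u w w]
  rw [he]
  refine le_inf (le_inf inf_le_left ?_) (le_inf ?_ ?_)
  · exact inf_le_right.trans (le_add_of_nonneg_right hv)
  · exact inf_le_right.trans (le_add_of_nonneg_left hu)
  · exact inf_le_right.trans (le_add_of_nonneg_right hw)

variable {H P : Set G}

lemma cls_neg (hH : IsConvexLSubgroup H) {a : G} (ha : a ∈ H) : -a ∈ H := hH.2.1 a ha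
lemma cls_add (hH : IsConvexLSubgroup H) {a b : G} (ha : a ∈ H) (hb : b ∈ H) : a + b ∈ H :=
  hH.2.2.1 a ha b hb
lemma cls_sup (hH : IsConvexLSubgroup H) {a b : G} (ha : a ∈ H) (hb : b ∈ H) : a ⊔ b ∈ H :=
  hH.2.2.2.1 a ha b hb
lemma cls_inf (hH : IsConvexLSubgroup H) {a b : G} (ha : a ∈ H) (hb : b ∈ H) : a ⊓ b ∈ H :=
  hH.2.2.2.2.1 a ha b hb
lemma cls_conv (hH : IsConvexLSubgroup H) {a b g : G} (ha : a ∈ H) (hb : b ∈ H)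
    (h1 : a ≤ g) (h2 : g ≤ b) : g ∈ H := hH.2.2.2.2.2 a ha b hb g h1 h2

lemma cls_labs_mem (hH : IsConvexLSubgroup H) {a : G} (ha : a ∈ H) : labs a ∈ H := by
  rw [labs_def]
  exact cls_add hH (cls_sup hH ha hH.1) (cls_sup hH (cls_neg hH ha) hH.1)

lemma cls_of_labs_mem (hH : IsConvexLSubgroup H) {a : G} (ha : labs a ∈ H) : a ∈ H :=
  cls_conv hH (cls_neg hH ha) ha (neg_le.mp (neg_le_labs a)) (le_labs a)

lemma cls_sandwich (hH : IsConvexLSubgroup H) {x y : G} (h0 : 0 ≤ x) (hxy : x ≤ y)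
    (hy : y ∈ H) : x ∈ H := cls_conv hH hH.1 hy h0 hxy

lemma prime_or (hP : IsPrimeSubgroup P) {a b : G} (h : labs a ⊓ labs b ∈ P) :
    a ∈ P ∨ b ∈ P :=
  (hP.2.2 _ _ h).imp (cls_of_labs_mem hP.1) (cls_of_labs_mem hP.1)

lemma list_sum_nonneg {l : List G} (h : ∀ x ∈ l, (0:G) ≤ x) : 0 ≤ l.sum := by
  induction l with
  | nil => simp
  | cons x l ih =>
    rw [List.sum_cons]
    calc (0:G) = 0 + 0 := (add_zero 0).symm
    _ ≤ x + l.sum := add_le_add (h x (List.mem_cons_self))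
        (ih fun y hy => h y (List.mem_cons_of_mem _ hy))

def Ebase (H : Set G) (a : G) : Set G := {y | (y ∈ H ∧ 0 ≤ y) ∨ y = a}

def CGen (H : Set G) (a : G) : Set G :=
  {x | ∃ l : List G, (∀ y ∈ l, y ∈ Ebase H a) ∧ labs x ≤ l.sum}

lemma ebase_nonneg {a : G} (ha : 0 ≤ a) {y : G} (hy : y ∈ Ebase H a) : 0 ≤ y := by
  rcases hy with ⟨_, h⟩ | rfl
  · exact h
  · exact ha

lemma mem_cgen_of {a : G} (ha : 0 ≤ a) {x : G} (l : List G)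
    (hl : ∀ y ∈ l, y ∈ Ebase H a) (h1 : x ≤ l.sum) (h2 : -x ≤ l.sum) : x ∈ CGen H a := by
  refine ⟨l ++ l, fun y hy => ?_, ?_⟩
  · rcases List.mem_append.mp hy with h | h
    · exact hl y h
    · exact hl y h
  · rw [List.sum_append]
    exact labs_le_of (list_sum_nonneg fun y hy => ebase_nonneg ha (hl y hy)) h1 h2

lemma cgen_spec {a x : G} (hx : x ∈ CGen H a) :
    ∃ l : List G, (∀ y ∈ l, y ∈ Ebase H a) ∧ x ≤ l.sum ∧ -x ≤ l.sum := by
  obtain ⟨l, hl, hle⟩ := hx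
  exact ⟨l, hl, (le_labs x).trans hle, (neg_le_labs x).trans hle⟩

lemma cgen_convex (hH : IsConvexLSubgroup H) {a : G} (ha : 0 ≤ a) :
    IsConvexLSubgroup (CGen H a) := by
  have hsum : ∀ l : List G, (∀ y ∈ l, y ∈ Ebase H a) → (0:G) ≤ l.sum :=
    fun l hl => list_sum_nonneg fun y hy => ebase_nonneg ha (hl y hy)
  have happ : ∀ {l₁ l₂ : List G}, (∀ y ∈ l₁, y ∈ Ebase H a) → (∀ y ∈ l₂, y ∈ Ebase H a) →
      (∀ y ∈ l₁ ++ l₂, y ∈ Ebase H a) := by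
    intro l₁ l₂ h₁ h₂ y hy
    rcases List.mem_append.mp hy with h | h
    · exact h₁ y h
    · exact h₂ y h
  refine ⟨?_, ?_, ?_, ?_, ?_, ?_⟩
  · exact mem_cgen_of ha [] (by simp) (by simp) (by simp)
  · intro x hx
    obtain ⟨l, hl, h1, h2⟩ := cgen_spec hx
    exact mem_cgen_of ha l hl h2 (by rwa [neg_neg])
  · intro x hx y hy
    obtain ⟨lx, hlx, hx1, hx2⟩ := cgen_spec hx
    obtain ⟨ly, hly, hy1, hy2⟩ := cgen_spec hy
    have hsx := hsum lx hlx
    have hsy := hsum ly hly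
    refine mem_cgen_of ha (lx ++ (ly ++ (lx ++ ly)))
      (happ hlx (happ hly (happ hlx hly))) ?_ ?_
    · simp only [List.sum_append]
      calc x + y ≤ lx.sum + ly.sum := add_le_add hx1 hy1
      _ ≤ lx.sum + (ly.sum + (lx.sum + ly.sum)) :=
        add_le_add_right (le_add_of_nonneg_right (add_nonneg hsx hsy)) _
    · simp only [List.sum_append]
      rw [neg_add_rev]
      calc -y + -x ≤ ly.sum + lx.sum := add_le_add hy2 hx2
      _ ≤ ly.sum + (lx.sum + ly.sum) :=
        add_le_add_right (le_add_of_nonneg_right hsy) _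
      _ ≤ lx.sum + (ly.sum + (lx.sum + ly.sum)) := le_add_of_nonneg_left hsx
  · intro x hx y hy
    obtain ⟨lx, hlx, hx1, hx2⟩ := cgen_spec hx
    obtain ⟨ly, hly, hy1, hy2⟩ := cgen_spec hy
    have hsx := hsum lx hlx
    have hsy := hsum ly hly
    refine mem_cgen_of ha (lx ++ ly) (happ hlx hly) ?_ ?_
    · rw [List.sum_append]
      exact sup_le (hx1.trans (le_add_of_nonneg_right hsy))
        (hy1.trans (le_add_of_nonneg_left hsx))
    · rw [List.sum_append]
      exact (neg_le_neg_iff.mpr le_sup_left).trans (hx2.trans (le_add_of_nonneg_right hsy))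
  · intro x hx y hy
    obtain ⟨lx, hlx, hx1, hx2⟩ := cgen_spec hx
    obtain ⟨ly, hly, hy1, hy2⟩ := cgen_spec hy
    have hsx := hsum lx hlx
    have hsy := hsum ly hly
    refine mem_cgen_of ha (lx ++ ly) (happ hlx hly) ?_ ?_
    · rw [List.sum_append]
      exact inf_le_left.trans (hx1.trans (le_add_of_nonneg_right hsy))
    · rw [List.sum_append, neg_inf]
      exact sup_le (hx2.trans (le_add_of_nonneg_right hsy))
        (hy2.trans (le_add_of_nonneg_left hsx))
  · intro u hu v hv g h1 h2
    obtain ⟨lu, hlu, hu1, hu2⟩ := cgen_spec hu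
    obtain ⟨lv, hlv, hv1, hv2⟩ := cgen_spec hv
    have hsu := hsum lu hlu
    have hsv := hsum lv hlv
    refine mem_cgen_of ha (lu ++ lv) (happ hlu hlv) ?_ ?_
    · rw [List.sum_append]
      exact h2.trans (hv1.trans (le_add_of_nonneg_left hsu))
    · rw [List.sum_append]
      exact (neg_le_neg_iff.mpr h1).trans (hu2.trans (le_add_of_nonneg_right hsv))

lemma subset_cgen (hH : IsConvexLSubgroup H) {a : G} (ha : 0 ≤ a) : H ⊆ CGen H a := by
  intro h hh
  refine mem_cgen_of ha [labs h] ?_ (by simpa using le_labs h) (by simpa using neg_le_labs h)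
  intro y hy
  rw [List.mem_singleton] at hy
  subst hy
  exact Or.inl ⟨cls_labs_mem hH hh, labs_nonneg h⟩

lemma self_mem_cgen {a : G} (ha : 0 ≤ a) : a ∈ CGen H a := by
  refine mem_cgen_of ha [a] ?_ (by simp) (by simpa using (neg_nonpos.mpr ha).trans ha)
  intro y hy
  rw [List.mem_singleton] at hy
  exact Or.inr hy

lemma cgen_subset (hH : IsConvexLSubgroup H) {c : G} (hcH : c ∈ H) :
    CGen H c ⊆ H := by
  rintro x ⟨l, hl, hle⟩
  have hsum : l.sum ∈ H := by
    clear hle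
    induction l with
    | nil => exact hH.1
    | cons y l ih =>
      rw [List.sum_cons]
      refine cls_add hH ?_ (ih fun z hz => hl z (List.mem_cons_of_mem _ hz))
      rcases hl y (List.mem_cons_self) with ⟨h, _⟩ | rfl
      · exact h
      · exact hcH
  exact cls_conv hH (cls_neg hH hsum) hsum
    (neg_le.mp ((neg_le_labs x).trans hle)) ((le_labs x).trans hle)

lemma pair_inner (hH : IsConvexLSubgroup H) {a b t : G} (ha : 0 ≤ a) (hb : 0 ≤ b)
    (ht : t ∈ Ebase H a) (l : List G) (hl : ∀ y ∈ l, y ∈ Ebase H b) :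
    ∃ m : List G, (∀ y ∈ m, y ∈ Ebase H (a ⊓ b)) ∧ t ⊓ l.sum ≤ m.sum := by
  have ht0 : 0 ≤ t := ebase_nonneg ha ht
  induction l with
  | nil => exact ⟨[], by simp, by simpa using inf_le_right⟩
  | cons s l ih =>
    obtain ⟨m, hm, hle⟩ := ih fun y hy => hl y (List.mem_cons_of_mem _ hy)
    have hs := hl s (List.mem_cons_self)
    have hs0 : 0 ≤ s := ebase_nonneg hb hs
    have hl0 : (0:G) ≤ l.sum :=
      list_sum_nonneg fun y hy => ebase_nonneg hb (hl y (List.mem_cons_of_mem _ hy))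
    refine ⟨(t ⊓ s) :: m, ?_, ?_⟩
    · intro y hy
      rcases List.mem_cons.mp hy with rfl | hy
      · rcases ht with ⟨htH, _⟩ | rfl
        · exact Or.inl ⟨cls_sandwich hH (le_inf ht0 hs0) inf_le_left htH, le_inf ht0 hs0⟩
        · rcases hs with ⟨hsH, _⟩ | rfl
          · exact Or.inl ⟨cls_sandwich hH (le_inf ht0 hs0) inf_le_right hsH, le_inf ht0 hs0⟩
          · exact Or.inr rfl
      · exact hm y hy
    · rw [List.sum_cons, List.sum_cons]
      calc t ⊓ (s + l.sum) = (s + l.sum) ⊓ t := inf_comm _ _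
      _ ≤ (s ⊓ t) + (l.sum ⊓ t) := riesz hs0 hl0 ht0
      _ = (t ⊓ s) + (t ⊓ l.sum) := by rw [inf_comm s t, inf_comm l.sum t]
      _ ≤ (t ⊓ s) + m.sum := add_le_add_right hle _

lemma pair_outer (hH : IsConvexLSubgroup H) {a b : G} (ha : 0 ≤ a) (hb : 0 ≤ b)
    (l₁ : List G) (hl₁ : ∀ y ∈ l₁, y ∈ Ebase H a)
    (l₂ : List G) (hl₂ : ∀ y ∈ l₂, y ∈ Ebase H b) :
    ∃ m : List G, (∀ y ∈ m, y ∈ Ebase H (a ⊓ b)) ∧ l₁.sum ⊓ l₂.sum ≤ m.sum := by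
  have hs₂ : (0:G) ≤ l₂.sum := list_sum_nonneg fun y hy => ebase_nonneg hb (hl₂ y hy)
  induction l₁ with
  | nil => exact ⟨[], by simp, by simpa using inf_le_left⟩
  | cons t l ih =>
    obtain ⟨m₂, hm₂, hle₂⟩ := ih fun y hy => hl₁ y (List.mem_cons_of_mem _ hy)
    have ht := hl₁ t (List.mem_cons_self)
    obtain ⟨m₁, hm₁, hle₁⟩ := pair_inner hH ha hb ht l₂ hl₂
    have ht0 : 0 ≤ t := ebase_nonneg ha ht
    have hl0 : (0:G) ≤ l.sum :=
      list_sum_nonneg fun y hy => ebase_nonneg ha (hl₁ y (List.mem_cons_of_mem _ hy))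
    refine ⟨m₁ ++ m₂, fun y hy => ?_, ?_⟩
    · rcases List.mem_append.mp hy with h | h
      · exact hm₁ y h
      · exact hm₂ y h
    · rw [List.sum_cons, List.sum_append]
      calc (t + l.sum) ⊓ l₂.sum ≤ (t ⊓ l₂.sum) + (l.sum ⊓ l₂.sum) := riesz ht0 hl0 hs₂
      _ ≤ m₁.sum + m₂.sum := add_le_add hle₁ hle₂

lemma cgen_inf (hH : IsConvexLSubgroup H) {a b x : G} (ha : 0 ≤ a) (hb : 0 ≤ b)
    (hxa : x ∈ CGen H a) (hxb : x ∈ CGen H b) : x ∈ CGen H (a ⊓ b) := by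
  obtain ⟨l₁, hl₁, h₁⟩ := hxa
  obtain ⟨l₂, hl₂, h₂⟩ := hxb
  obtain ⟨m, hm, hle⟩ := pair_outer hH ha hb l₁ hl₁ l₂ hl₂
  exact ⟨m, hm, (le_inf h₁ h₂).trans hle⟩

lemma prime_of_pos_prime {K : Set G} (hK : IsConvexLSubgroup K) (hne : K ≠ Set.univ)
    (hpos : ∀ a b : G, 0 ≤ a → 0 ≤ b → a ⊓ b ∈ K → a ∈ K ∨ b ∈ K) :
    IsPrimeSubgroup K := by
  refine ⟨hK, hne, fun a b hab => ?_⟩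
  have h1 : (a + -(a ⊓ b)) ⊓ (b + -(a ⊓ b)) = 0 := by
    rw [← inf_add]
    exact add_neg_cancel _
  have pos1 : 0 ≤ a + -(a ⊓ b) := by
    have : (a ⊓ b) + -(a ⊓ b) ≤ a + -(a ⊓ b) := add_le_add_left inf_le_left _
    rwa [add_neg_cancel] at this
  have pos2 : 0 ≤ b + -(a ⊓ b) := by
    have : (a ⊓ b) + -(a ⊓ b) ≤ b + -(a ⊓ b) := add_le_add_left inf_le_right _
    rwa [add_neg_cancel] at this
  rcases hpos _ _ pos1 pos2 (by rw [h1]; exact hK.1) with h | h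
  · left
    have := cls_add hK h hab
    rwa [neg_add_cancel_right] at this
  · right
    have := cls_add hK h hab
    rwa [neg_add_cancel_right] at this

lemma exists_prime_disjoint (hH : IsConvexLSubgroup H) {S : Set G}
    (hS0 : ∀ s ∈ S, 0 ≤ s) (hSinf : ∀ s ∈ S, ∀ t ∈ S, s ⊓ t ∈ S) (hSne : S.Nonempty)
    (hdisj : ∀ s ∈ S, s ∉ H) :
    ∃ P : Set G, IsPrimeSubgroup P ∧ H ⊆ P ∧ ∀ s ∈ S, s ∉ P := by
  set 𝒮 : Set (Set G) := {K | IsConvexLSubgroup K ∧ ∀ s ∈ S, s ∉ K} with h𝒮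
  have hchain : ∀ c ⊆ 𝒮, IsChain (· ⊆ ·) c → c.Nonempty →
      ∃ ub ∈ 𝒮, ∀ s ∈ c, s ⊆ ub := by
    rintro c hc hch ⟨K₀, hK₀⟩
    have hmem2 : ∀ {x y : G}, x ∈ ⋃₀ c → y ∈ ⋃₀ c →
        ∃ K ∈ c, x ∈ K ∧ y ∈ K := by
      rintro x y ⟨K₁, hK₁, hx⟩ ⟨K₂, hK₂, hy⟩
      rcases hch.total hK₁ hK₂ with h | h
      · exact ⟨K₂, hK₂, h hx, hy⟩
      · exact ⟨K₁, hK₁, hx, h hy⟩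
    refine ⟨⋃₀ c, ⟨⟨⟨K₀, hK₀, (hc hK₀).1.1⟩, ?_, ?_, ?_, ?_, ?_⟩, ?_⟩,
      fun s hs => Set.subset_sUnion_of_mem hs⟩
    · rintro x ⟨K, hK, hx⟩
      exact ⟨K, hK, cls_neg (hc hK).1 hx⟩
    · intro x hx y hy
      obtain ⟨K, hK, hx, hy⟩ := hmem2 hx hy
      exact ⟨K, hK, cls_add (hc hK).1 hx hy⟩
    · intro x hx y hy
      obtain ⟨K, hK, hx, hy⟩ := hmem2 hx hy
      exact ⟨K, hK, cls_sup (hc hK).1 hx hy⟩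
    · intro x hx y hy
      obtain ⟨K, hK, hx, hy⟩ := hmem2 hx hy
      exact ⟨K, hK, cls_inf (hc hK).1 hx hy⟩
    · intro x hx y hy g h1 h2
      obtain ⟨K, hK, hx, hy⟩ := hmem2 hx hy
      exact ⟨K, hK, cls_conv (hc hK).1 hx hy h1 h2⟩
    · rintro s hs ⟨K, hK, hsK⟩
      exact (hc hK).2 s hs hsK
  obtain ⟨M, hHM, hMmax⟩ := zorn_subset_nonempty 𝒮 hchain H ⟨hH, hdisj⟩
  have hMc : IsConvexLSubgroup M := hMmax.prop.1
  have hMdisj : ∀ s ∈ S, s ∉ M := hMmax.prop.2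
  have hne : M ≠ Set.univ := by
    intro h
    obtain ⟨s, hs⟩ := hSne
    exact hMdisj s hs (h ▸ Set.mem_univ s)
  have key : ∀ x : G, 0 ≤ x → x ∉ M → ∃ s ∈ S, s ∈ CGen M x := by
    intro x hx hxM
    by_contra hnone
    push_neg at hnone
    have hmem : CGen M x ∈ 𝒮 := ⟨cgen_convex hMc hx, hnone⟩
    have hsub : M ⊆ CGen M x := subset_cgen hMc hx
    exact hxM (hMmax.2 hmem hsub (self_mem_cgen hx))
  refine ⟨M, prime_of_pos_prime hMc hne ?_, hHM, hMdisj⟩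
  intro a b ha hb hab
  by_contra hcon
  push_neg at hcon
  obtain ⟨s₁, hs₁S, hs₁⟩ := key a ha hcon.1
  obtain ⟨s₂, hs₂S, hs₂⟩ := key b hb hcon.2
  have h0 : 0 ≤ s₁ ⊓ s₂ := le_inf (hS0 _ hs₁S) (hS0 _ hs₂S)
  have hA : s₁ ⊓ s₂ ∈ CGen M a :=
    cls_sandwich (cgen_convex hMc ha) h0 inf_le_left hs₁
  have hB : s₁ ⊓ s₂ ∈ CGen M b :=
    cls_sandwich (cgen_convex hMc hb) h0 inf_le_right hs₂
  exact hMdisj _ (hSinf _ hs₁S _ hs₂S) (cgen_subset hMc hab (cgen_inf hMc ha hb hA hB))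

lemma zero_cls : IsConvexLSubgroup ({0} : Set G) := by
  refine ⟨rfl, ?_, ?_, ?_, ?_, ?_⟩
  · intro a ha; simp_all
  · intro a ha b hb; simp_all
  · intro a ha b hb; simp_all
  · intro a ha b hb; simp_all
  · intro a ha b hb g h1 h2
    simp only [Set.mem_singleton_iff] at *
    subst ha; subst hb
    exact le_antisymm h2 h1

lemma exists_prime_of_not_mem (hH : IsConvexLSubgroup H) {g : G} (hg : g ∉ H) :
    ∃ P : Set G, IsPrimeSubgroup P ∧ H ⊆ P ∧ g ∉ P := by
  obtain ⟨P, hP, hHP, hPd⟩ := exists_prime_disjoint hH (S := {labs g})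
    (by rintro s rfl; exact labs_nonneg g)
    (by rintro s rfl t rfl; rw [inf_idem]; rfl)
    ⟨labs g, rfl⟩
    (by rintro s rfl hmem; exact hg (cls_of_labs_mem hH hmem))
  exact ⟨P, hP, hHP, fun h => hPd (labs g) rfl (cls_labs_mem hP.1 h)⟩

lemma exists_minimal_prime_le {P : Set G} (hP : IsPrimeSubgroup P) :
    ∃ Q : Set G, IsMinimalPrimeLSubgroup Q ∧ Q ⊆ P := by
  set 𝒮 : Set (Set G) := {Q | IsPrimeSubgroup Q ∧ Q ⊆ P} with h𝒮
  have hchain : ∀ c ⊆ 𝒮, IsChain (· ⊆ ·) c → c.Nonempty →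
      ∃ lb ∈ 𝒮, ∀ s ∈ c, lb ⊆ s := by
    rintro c hc hch ⟨K₀, hK₀⟩
    have hconv : IsConvexLSubgroup (⋂₀ c) := by
      refine ⟨?_, ?_, ?_, ?_, ?_, ?_⟩
      · exact fun K hK => (hc hK).1.1.1
      · intro x hx K hK
        exact cls_neg (hc hK).1.1 (hx K hK)
      · intro x hx y hy K hK
        exact cls_add (hc hK).1.1 (hx K hK) (hy K hK)
      · intro x hx y hy K hK
        exact cls_sup (hc hK).1.1 (hx K hK) (hy K hK)
      · intro x hx y hy K hK
        exact cls_inf (hc hK).1.1 (hx K hK) (hy K hK)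
      · intro x hx y hy g h1 h2 K hK
        exact cls_conv (hc hK).1.1 (hx K hK) (hy K hK) h1 h2
    have hsub : ⋂₀ c ⊆ P := (Set.sInter_subset_of_mem hK₀).trans (hc hK₀).2
    refine ⟨⋂₀ c, ⟨⟨hconv, ?_, ?_⟩, hsub⟩, fun s hs => Set.sInter_subset_of_mem hs⟩
    · intro h
      exact hP.2.1 (Set.eq_univ_of_univ_subset ((h ▸ hsub : Set.univ ⊆ P)))
    · intro a b hab
      by_contra hcon
      push_neg at hcon
      obtain ⟨ha, hb⟩ := hcon
      obtain ⟨K₁, hK₁, ha₁⟩ : ∃ K ∈ c, a ∉ K := by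
        by_contra hall
        push_neg at hall
        exact ha fun K hK => hall K hK
      obtain ⟨K₂, hK₂, hb₂⟩ : ∃ K ∈ c, b ∉ K := by
        by_contra hall
        push_neg at hall
        exact hb fun K hK => hall K hK
      rcases hch.total hK₁ hK₂ with h | h
      · rcases (hc hK₁).1.2.2 a b (hab K₁ hK₁) with h' | h'
        · exact ha₁ h'
        · exact hb₂ (h h')
      · rcases (hc hK₂).1.2.2 a b (hab K₂ hK₂) with h' | h'
        · exact ha₁ (h h')
        · exact hb₂ h'
  obtain ⟨M, hMP, hMmin⟩ := zorn_superset_nonempty 𝒮 hchain P ⟨hP, subset_rfl⟩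
  refine ⟨M, ⟨hMmin.prop.1, ?_⟩, hMmin.prop.2⟩
  intro Q hQ hQM
  exact Set.Subset.antisymm hQM (hMmin.2 ⟨hQ, hQM.trans hMmin.prop.2⟩ hQM)

lemma minimal_prime_polar {Q : Set G} (hQ : IsMinimalPrimeLSubgroup Q) {h : G} (hh : h ∈ Q) :
    ∃ k : G, labs k ⊓ labs h = 0 ∧ k ∉ Q := by
  by_contra hcon
  push_neg at hcon
  set S : Set G := {z | ∃ x : G, 0 ≤ x ∧ x ∉ Q ∧ z = x ⊓ labs h} with hS
  obtain ⟨y₀, hy₀⟩ := (Set.ne_univ_iff_exists_notMem _).mp hQ.1.2.1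
  have hly₀ : labs y₀ ∉ Q := fun hm => hy₀ (cls_of_labs_mem hQ.1.1 hm)
  have hS0 : ∀ s ∈ S, 0 ≤ s := by
    rintro s ⟨x, hx0, _, rfl⟩
    exact le_inf hx0 (labs_nonneg h)
  have hSinf : ∀ s ∈ S, ∀ t ∈ S, s ⊓ t ∈ S := by
    rintro s ⟨x, hx0, hxQ, rfl⟩ t ⟨y, hy0, hyQ, rfl⟩
    refine ⟨x ⊓ y, le_inf hx0 hy0, ?_, ?_⟩
    · intro hmem
      rcases hQ.1.2.2 x y hmem with h' | h'
      · exact hxQ h'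
      · exact hyQ h'
    · rw [inf_inf_inf_comm, inf_idem]
  have hSne : S.Nonempty := ⟨labs y₀ ⊓ labs h, labs y₀, labs_nonneg y₀, hly₀, rfl⟩
  have hdisj : ∀ s ∈ S, s ∉ ({0} : Set G) := by
    rintro s ⟨x, hx0, hxQ, rfl⟩ hmem
    rw [Set.mem_singleton_iff] at hmem
    have : labs x ⊓ labs h = 0 := by rwa [labs_of_nonneg hx0]
    exact hxQ (hcon x this)
  obtain ⟨W, hW, _, hWd⟩ := exists_prime_disjoint zero_cls hS0 hSinf hSne hdisj
  have hWQ : W ⊆ Q := by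
    intro w hw
    by_contra hwQ
    have hlw : labs w ∉ Q := fun hm => hwQ (cls_of_labs_mem hQ.1.1 hm)
    refine hWd (labs w ⊓ labs h) ⟨labs w, labs_nonneg w, hlw, rfl⟩ ?_
    exact cls_sandwich hW.1 (le_inf (labs_nonneg w) (labs_nonneg h)) inf_le_left
      (cls_labs_mem hW.1 hw)
  have hhW : h ∉ W := by
    intro hmem
    refine hWd (labs y₀ ⊓ labs h) ⟨labs y₀, labs_nonneg y₀, hly₀, rfl⟩ ?_
    exact cls_sandwich hW.1 (le_inf (labs_nonneg y₀) (labs_nonneg h)) inf_le_right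
      (cls_labs_mem hW.1 hmem)
  exact hhW (hQ.2 W hW hWQ ▸ hh)

lemma basic_nbhd {O : Set (SpecType G)} (hO : @IsOpen _ (patchTop G) O) :
    ∀ P : SpecType G, P ∈ O → ∃ a b : G, a ∉ P.1 ∧ b ∈ P.1 ∧
      ∀ Q : SpecType G, a ∉ Q.1 → b ∈ Q.1 → Q ∈ O := by
  have hO' : TopologicalSpace.GenerateOpen
      ({S : Set (SpecType G) | ∃ g : G, S = Uset g} ∪
        {S : Set (SpecType G) | ∃ g : G, S = Vset g}) O := hO
  clear hO
  induction hO' with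
  | basic s hs =>
    intro P hP
    rcases hs with ⟨g, rfl⟩ | ⟨g, rfl⟩
    · exact ⟨g, 0, hP, P.2.1.1, fun Q hg _ => hg⟩
    · obtain ⟨a, ha⟩ := (Set.ne_univ_iff_exists_notMem _).mp P.2.2.1
      exact ⟨a, g, ha, hP, fun Q _ hg => hg⟩
  | univ =>
    intro P _
    obtain ⟨a, ha⟩ := (Set.ne_univ_iff_exists_notMem _).mp P.2.2.1
    exact ⟨a, 0, ha, P.2.1.1, fun _ _ _ => trivial⟩
  | inter O₁ O₂ h₁ h₂ ih₁ ih₂ =>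
    intro P hP
    obtain ⟨a₁, b₁, ha₁, hb₁, hQ₁⟩ := ih₁ P hP.1
    obtain ⟨a₂, b₂, ha₂, hb₂, hQ₂⟩ := ih₂ P hP.2
    have h0 : (0:G) ≤ labs a₁ ⊓ labs a₂ := le_inf (labs_nonneg a₁) (labs_nonneg a₂)
    refine ⟨labs a₁ ⊓ labs a₂, labs b₁ ⊔ labs b₂, ?_, ?_, ?_⟩
    · intro hmem
      rcases prime_or P.2 hmem with h | h
      · exact ha₁ h
      · exact ha₂ h
    · exact cls_sup P.2.1 (cls_labs_mem P.2.1 hb₁) (cls_labs_mem P.2.1 hb₂)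
    · intro Q ha hb
      have hQa₁ : a₁ ∉ Q.1 := fun hm =>
        ha (cls_sandwich Q.2.1 h0 inf_le_left (cls_labs_mem Q.2.1 hm))
      have hQa₂ : a₂ ∉ Q.1 := fun hm =>
        ha (cls_sandwich Q.2.1 h0 inf_le_right (cls_labs_mem Q.2.1 hm))
      have hQb₁ : b₁ ∈ Q.1 :=
        cls_of_labs_mem Q.2.1 (cls_sandwich Q.2.1 (labs_nonneg b₁) le_sup_left hb)
      have hQb₂ : b₂ ∈ Q.1 :=
        cls_of_labs_mem Q.2.1 (cls_sandwich Q.2.1 (labs_nonneg b₂) le_sup_right hb)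
      exact ⟨hQ₁ Q hQa₁ hQb₁, hQ₂ Q hQa₂ hQb₂⟩
  | sUnion 𝒯 h ih =>
    intro P hP
    obtain ⟨t, ht, hPt⟩ := hP
    obtain ⟨a, b, ha, hb, hQ⟩ := ih t ht P hPt
    exact ⟨a, b, ha, hb, fun Q h1 h2 => ⟨t, ht, hQ Q h1 h2⟩⟩

lemma martinez_pibase (hM : Martinez G) :
    ∀ O : Set (SpecType G), @IsOpen _ (patchTop G) O → O.Nonempty →
      ∃ g : G, 0 < g ∧ (Uset g).Nonempty ∧ Uset g ⊆ O := by
  rintro O hO ⟨P, hP⟩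
  obtain ⟨a, b, ha, hb, hQ⟩ := basic_nbhd hO P hP
  have hd : biPolar b ⊆ P.1 := (hM P.1 P.2.1).2 b hb
  have hnb : a ∉ biPolar b := fun h => ha (hd h)
  simp only [biPolar, Set.mem_setOf_eq] at hnb
  push_neg at hnb
  obtain ⟨k, hk, hne⟩ := hnb
  set g := labs a ⊓ labs k with hg
  have hg0 : (0:G) ≤ g := le_inf (labs_nonneg a) (labs_nonneg k)
  have hgpos : 0 < g := lt_of_le_of_ne hg0 (Ne.symm hne)
  have hUsub : Uset g ⊆ O := by
    intro Q hQg
    have hka : a ∉ Q.1 := fun hm =>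
      hQg (cls_sandwich Q.2.1 hg0 inf_le_left (cls_labs_mem Q.2.1 hm))
    have hkk : k ∉ Q.1 := fun hm =>
      hQg (cls_sandwich Q.2.1 hg0 inf_le_right (cls_labs_mem Q.2.1 hm))
    have hbQ : b ∈ Q.1 := by
      have h0 : labs k ⊓ labs b ∈ Q.1 := by rw [hk]; exact Q.2.1.1
      rcases prime_or Q.2 h0 with h | h
      · exact absurd h hkk
      · exact h
    exact hQ Q hka hbQ
  have hUne : (Uset g).Nonempty := by
    have hg0' : g ∉ ({0} : Set G) := by
      rw [Set.mem_singleton_iff]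
      exact hgpos.ne'
    obtain ⟨W, hW, _, hgW⟩ := exists_prime_of_not_mem zero_cls hg0'
    exact ⟨⟨W, hW⟩, hgW⟩
  exact ⟨g, hgpos, hUne, hUsub⟩

lemma pibase_dense
    (hpi : ∀ O : Set (SpecType G), @IsOpen _ (patchTop G) O → O.Nonempty →
      ∃ g : G, 0 < g ∧ (Uset g).Nonempty ∧ Uset g ⊆ O) :
    @Dense (SpecType G) (patchTop G) {P : SpecType G | IsMinimalPrimeLSubgroup P.1} := by
  refine (@dense_iff_inter_open _ (patchTop G)).mpr ?_
  intro U hU hUne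
  obtain ⟨g, hg, ⟨P, hP⟩, hsub⟩ := hpi U hU hUne
  obtain ⟨Q, hQmin, hQP⟩ := exists_minimal_prime_le P.2
  refine ⟨⟨Q, hQmin.1⟩, hsub (fun hmem => hP (hQP hmem)), hQmin⟩

lemma dense_martinez
    (hd : @Dense (SpecType G) (patchTop G) {P : SpecType G | IsMinimalPrimeLSubgroup P.1}) :
    Martinez G := by
  intro H hH
  refine ⟨hH, fun h hh g hg => ?_⟩
  by_contra hgH
  obtain ⟨P, hP, hHP, hgP⟩ := exists_prime_of_not_mem hH hgH
  have hOopen : @IsOpen _ (patchTop G) (Uset g ∩ Vset h) :=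
    TopologicalSpace.GenerateOpen.inter _ _
      (TopologicalSpace.GenerateOpen.basic _ (Or.inl ⟨g, rfl⟩))
      (TopologicalSpace.GenerateOpen.basic _ (Or.inr ⟨h, rfl⟩))
  have hOne : (Uset g ∩ Vset h).Nonempty := ⟨⟨P, hP⟩, hgP, hHP hh⟩
  obtain ⟨Q, hQO, hQmin⟩ :=
    (@dense_iff_inter_open _ (patchTop G)).mp hd _ hOopen hOne
  obtain ⟨k, hk, hkQ⟩ := minimal_prime_polar hQmin hQO.2
  have h0 : labs g ⊓ labs k ∈ Q.1 := by rw [hg k hk]; exact Q.2.1.1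
  rcases prime_or Q.2 h0 with hcase | hcase
  · exact hQO.1 hcase
  · exact hkQ hcase

end Stmt4Aux

/-- `G` is Martínez iff `Min(G)` is dense in `Spec(G)` for the
patch topology, iff `{U(g) : 0 < g}` is a π-base for the patch topology. -/
theorem stmt_4 {G : Type*} [Lattice G] [AddGroup G]
    [CovariantClass G G (· + ·) (· ≤ ·)]
    [CovariantClass G G (Function.swap (· + ·)) (· ≤ ·)] :
    (Martinez G ↔ @Dense (SpecType G) (patchTop G) {P : SpecType G | IsMinimalPrimeLSubgroup P.1}) ∧
    (Martinez G ↔ ∀ O : Set (SpecType G), @IsOpen _ (patchTop G) O → O.Nonempty →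
        ∃ g : G, 0 < g ∧ (Uset g).Nonempty ∧ Uset g ⊆ O) := by
  constructor
  · exact ⟨fun hm => Stmt4Aux.pibase_dense (Stmt4Aux.martinez_pibase hm), Stmt4Aux.dense_martinez⟩
  · exact ⟨Stmt4Aux.martinez_pibase,
      fun hpi => Stmt4Aux.dense_martinez (Stmt4Aux.pibase_dense hpi)⟩
end
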